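/- arXiv:2603.01191 — 5 statements merged into one kernel-verified Lean document; each statement's English description precedes it below -/
import Mathlib

section
/- Let A be a real m×n matrix of rank r and let ℓ ≥ 1. If Ω is a standard Gaussian random n×ℓ matrix, then almost surely the rank of the product AΩ equals min(r, ℓ). -/
/-!
A nonzero polynomial in finitely many variables vanishes only on a null set of any product of
atomless measures: by Fubini, for almost every value of the other variables the leading
coefficient in the first variable does not vanish, and a nonzero one-variable polynomial has
finitely many roots.

With `k = min r ℓ` and `B` the first `k` columns of `A Ω`, the Gram determinant `det (Bᵀ B)` is a
polynomial in the entries of `Ω`, and it is nonzero exactly when `rank B = k`. It does not vanish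
identically, since `Ω` can be chosen so that `A` maps its first `k` columns to `k` independent
vectors of the range of `A`. Hence almost surely `rank (A Ω) ≥ rank B = k`, and `rank (A Ω) ≤ k`
always holds.
-/

open MeasureTheory ProbabilityTheory

noncomputable section

/-- Matrices carry the product (Borel) measurable structure, entrywise. -/
instance (n ℓ : ℕ) : MeasurableSpace (Matrix (Fin n) (Fin ℓ) ℝ) := MeasurableSpace.pi

/-- The law of a standard Gaussian random `n × ℓ` matrix: i.i.d. `N(0,1)` entries. -/
def stdGaussMat (n ℓ : ℕ) : Measure (Matrix (Fin n) (Fin ℓ) ℝ) :=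
  Measure.pi fun _ : Fin n => Measure.pi fun _ : Fin ℓ => gaussianReal 0 1

theorem Polynomial.ae_eval_ne_zero {K : Type*} [CommRing K] [IsDomain K] [MeasurableSpace K]
    [MeasurableSingletonClass K] {μ : Measure K} [NullSingletonClass μ] {p : Polynomial K}
    (hp : p ≠ 0) : ∀ᵐ x ∂μ, p.eval x ≠ 0 :=
  measure_mono_null (fun _ hx => not_not.1 hx) ((finite_setOfPred_isRoot hp).measure_zero μ)

namespace MvPolynomial

theorem measurable_eval {R σ : Type*} [CommSemiring R] [MeasurableSpace R] [MeasurableAdd₂ R]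
    [MeasurableMul₂ R] (p : MvPolynomial σ R) : Measurable fun x : σ → R => eval x p := by
  induction p using MvPolynomial.induction_on with
  | C a => simp
  | add p q hp hq => simp only [map_add]; fun_prop
  | mul_X p i hp => simp only [map_mul, eval_X]; fun_prop

variable {K : Type*} [CommRing K] [IsDomain K] [MeasurableSpace K] [MeasurableAdd₂ K]
  [MeasurableMul₂ K] [MeasurableSingletonClass K]

theorem ae_eval_ne_zero_fin : ∀ {n : ℕ} (μ : Fin n → Measure K) [∀ i, SigmaFinite (μ i)]
    [∀ i, NullSingletonClass (μ i)] {p : MvPolynomial (Fin n) K}, p ≠ 0 →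
    ∀ᵐ x ∂Measure.pi μ, eval x p ≠ 0
  | 0, μ, _, _, p, hp => by
    obtain ⟨a, rfl⟩ := C_surjective (Fin 0) p
    exact ae_of_all _ fun x => by simpa using hp
  | n + 1, μ, _, _, p, hp => by
    set q := finSuccEquiv K n p
    have hq : q ≠ 0 := by simpa [q] using hp
    have hlead : ∀ᵐ y ∂Measure.pi fun i => μ i.succ, eval y q.leadingCoeff ≠ 0 :=
      ae_eval_ne_zero_fin _ (Polynomial.leadingCoeff_ne_zero.2 hq)
    have hslice : ∀ᵐ y ∂Measure.pi fun i => μ i.succ, ∀ᵐ a ∂μ 0, eval (Fin.cons a y) p ≠ 0 := by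
      filter_upwards [hlead] with y hy
      have hqy : q.map (eval y) ≠ 0 := fun h => hy <| by
        simpa using congrArg (Polynomial.coeff · q.natDegree) h
      simpa only [eval_eq_eval_mv_eval'] using Polynomial.ae_eval_ne_zero hqy
    set e := MeasurableEquiv.piFinSuccAbove (fun _ => K) 0
    have hmeas : MeasurableSet {z | eval (e.symm z) p ≠ 0} :=
      (measurableSet_singleton 0).compl.preimage ((measurable_eval p).comp e.symm.measurable)
    rw [← (measurePreserving_piFinSuccAbove μ 0).symm.map_eq,
      e.symm.measurableEmbedding.ae_map_iff, Measure.ae_prod_iff_ae_ae hmeas,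
      Measure.ae_ae_comm hmeas]
    simp only [e, MeasurableEquiv.piFinSuccAbove_symm_apply, Fin.insertNthEquiv_zero,
      Fin.succAbove_zero]
    exact hslice

theorem ae_eval_ne_zero {σ : Type*} [Fintype σ] (μ : σ → Measure K) [∀ i, SigmaFinite (μ i)]
    [∀ i, NullSingletonClass (μ i)] {p : MvPolynomial σ K} (hp : p ≠ 0) :
    ∀ᵐ x ∂Measure.pi μ, eval x p ≠ 0 := by
  set f := (Fintype.equivFin σ).symm
  have hp' : rename f.symm p ≠ 0 :=
    (rename_injective _ f.symm.injective).ne_iff' (map_zero _) |>.2 hp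
  rw [← (measurePreserving_piCongrLeft μ f).map_eq,
    (MeasurableEquiv.measurableEmbedding _).ae_map_iff]
  filter_upwards [ae_eval_ne_zero_fin (fun i => μ (f i)) hp'] with x hx
  have hx' : MeasurableEquiv.piCongrLeft (fun _ => K) f x = x ∘ f.symm := by
    ext i
    simp [MeasurableEquiv.coe_piCongrLeft, Equiv.piCongrLeft_apply_eq_cast]
  rwa [hx', ← eval_rename]

theorem ae_eval_uncurry_ne_zero {ι κ : Type*} [Fintype ι] [Fintype κ] (μ : ι → κ → Measure K)
    [∀ i j, IsProbabilityMeasure (μ i j)] [∀ i j, NullSingletonClass (μ i j)]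
    {p : MvPolynomial (ι × κ) K} (hp : p ≠ 0) :
    ∀ᵐ x ∂Measure.pi fun i => Measure.pi (μ i), eval (fun v => x v.1 v.2) p ≠ 0 := by
  have hcurry := Measure.infinitePi_map_curry μ
  simp only [Measure.infinitePi_eq_pi] at hcurry
  rw [← hcurry, (MeasurableEquiv.measurableEmbedding _).ae_map_iff]
  exact ae_eval_ne_zero _ hp

end MvPolynomial

namespace Matrix

variable {K : Type*} [Field K] {m n ℓ k : Type*} [Fintype n]

theorem det_ne_zero_iff_rank_eq [DecidableEq n] (M : Matrix n n K) :
    M.det ≠ 0 ↔ M.rank = Fintype.card n := by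
  rw [rank_eq_finrank_span_cols, eq_comm, ← Set.finrank,
    ← linearIndependent_iff_card_eq_finrank_span, linearIndependent_cols_iff_isUnit,
    isUnit_iff_isUnit_det, isUnit_iff_ne_zero]

theorem det_transpose_mul_self_ne_zero_iff [LinearOrder K] [IsStrictOrderedRing K] [Fintype m]
    [DecidableEq n] (B : Matrix m n K) : (Bᵀ * B).det ≠ 0 ↔ B.rank = Fintype.card n := by
  rw [det_ne_zero_iff_rank_eq, rank_transpose_mul_self]

theorem exists_rank_mul_submatrix_eq (A : Matrix m n K) {r : ℕ} {u : Fin r → ℓ}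
    (hu : u.Injective) (hr : r ≤ A.rank) :
    ∃ Ω : Matrix n ℓ K, ((A * Ω).submatrix id u).rank = r := by
  obtain ⟨v, hv⟩ := exists_linearIndependent_of_le_rank (R := K)
    (Module.finrank_eq_rank K (LinearMap.range A.mulVecLin) ▸ Nat.cast_le.2 hr)
  choose w hw using fun c => LinearMap.mem_range.1 (v c).2
  refine ⟨of fun j => Function.extend u (fun c => w c j) 0, ?_⟩
  have hcol : ((A * of fun j => Function.extend u (fun c => w c j) 0).submatrix id u).col =
      (LinearMap.range A.mulVecLin).subtype ∘ v := by
    ext c i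
    simp [← hw c, mulVec, dotProduct, mul_apply, hu.extend_apply]
  rw [rank_eq_finrank_span_cols, hcol,
    finrank_span_eq_card (hv.map' _ (Submodule.ker_subtype _)), Fintype.card_fin]

theorem exists_mvPolynomial_eval_eq_det_gram {R : Type*} [CommRing R] [Fintype m] [Fintype k]
    [DecidableEq k] (A : Matrix m n R) (u : k → ℓ) :
    ∃ P : MvPolynomial (n × ℓ) R, ∀ Ω : Matrix n ℓ R,
      MvPolynomial.eval (fun v => Ω v.1 v.2) P =
        (((A * Ω).submatrix id u)ᵀ * (A * Ω).submatrix id u).det := by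
  set B := (A.map (MvPolynomial.C (σ := n × ℓ)) * mvPolynomialX n ℓ R).submatrix id u
  refine ⟨(Bᵀ * B).det, fun Ω => ?_⟩
  have hB : B.map (MvPolynomial.eval fun v => Ω v.1 v.2) = (A * Ω).submatrix id u := by
    ext i j
    simp [B, mul_apply]
  rw [RingHom.map_det, RingHom.mapMatrix_apply, Matrix.map_mul, transpose_map, hB]

end Matrix

theorem rank_mul_gaussian_ae_general (m n : ℕ) (A : Matrix (Fin m) (Fin n) ℝ) (r : ℕ)
    (hA : A.rank = r) (ℓ : ℕ) :
    ∀ᵐ Ω ∂(stdGaussMat n ℓ), (A * Ω).rank = min r ℓ := by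
  subst hA
  set u := Fin.castLE (min_le_right A.rank ℓ)
  obtain ⟨Ω₀, hΩ₀⟩ :=
    A.exists_rank_mul_submatrix_eq (u := u) (Fin.castLE_injective _) (min_le_left A.rank ℓ)
  obtain ⟨P, hP⟩ := A.exists_mvPolynomial_eval_eq_det_gram u
  have hP0 : P ≠ 0 := fun h =>
    (Matrix.det_transpose_mul_self_ne_zero_iff _).2 (by rw [hΩ₀, Fintype.card_fin])
      (by rw [← hP, h, map_zero])
  have := nullSingletonClass_gaussianReal (μ := 0) one_ne_zero
  filter_upwards [MvPolynomial.ae_eval_uncurry_ne_zero _ hP0]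
    with Ω (hΩ : MvPolynomial.eval (fun v => Ω v.1 v.2) P ≠ 0)
  rw [hP, Matrix.det_transpose_mul_self_ne_zero_iff, Fintype.card_fin] at hΩ
  refine le_antisymm (le_min (A.rank_mul_le_left Ω) ?_) (hΩ ▸ Matrix.rank_submatrix_le _ _ _)
  exact (A.rank_mul_le_right Ω).trans Ω.rank_le_width

/-- If `A` is a real `m × n` matrix of rank `r` and `Ω` is a standard Gaussian random
`n × ℓ` matrix with `ℓ ≥ 1`, then almost surely `rank (A * Ω) = min r ℓ`. -/
theorem rank_mul_gaussian_ae (m n : ℕ) (A : Matrix (Fin m) (Fin n) ℝ) (r : ℕ)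
    (hA : A.rank = r) (ℓ : ℕ) (hℓ : 1 ≤ ℓ) :
    ∀ᵐ Ω ∂(stdGaussMat n ℓ), (A * Ω).rank = min r ℓ :=
  rank_mul_gaussian_ae_general m n A r hA ℓ
end
end

section
/- Let A ∈ ℝ^{m×n} have an economy-sized SVD with k-dominant left singular subspace U₁, and let 0 ≤ p′ ≤ p be integers. Let Ω be a standard Gaussian random n×(k+p) matrix and Ω′ a standard Gaussian random n×(k+p′) matrix. Then for every real t, ℙ( sinθ₁(U₁, range(AΩ)) < t ) ≥ ℙ( sinθ₁(U₁, range(AΩ′)) < t ). That is, the cumulative distribution function of the largest principal angle of the randomized range finder is pointwise increasing in the oversampling parameter p. -/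
open MeasureTheory ProbabilityTheory Matrix

noncomputable section

/-- Identification of `Fin m → ℝ` with Euclidean space `ℝ^m`. -/
def toE {m : ℕ} : (Fin m → ℝ) ≃ₗ[ℝ] EuclideanSpace ℝ (Fin m) :=
  (WithLp.linearEquiv 2 ℝ (Fin m → ℝ)).symm

/-- The column space of a matrix, as a subspace of Euclidean space. -/
def colSpaceE {m n : ℕ} (A : Matrix (Fin m) (Fin n) ℝ) :
    Submodule ℝ (EuclideanSpace ℝ (Fin m)) :=
  (LinearMap.range A.mulVecLin).map toE.toLinearMap

/-- The sine of the largest principal angle between subspaces `U` and `W`: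
`‖(id − P_W) ∘ P_U‖`, where `P` denotes orthogonal projection. -/
def sinTheta {H : Type} [NormedAddCommGroup H] [InnerProductSpace ℝ H]
    [FiniteDimensional ℝ H] (U W : Submodule ℝ H) : ℝ :=
  ‖((ContinuousLinearMap.id ℝ H) - W.subtypeL.comp W.orthogonalProjectionOnto).comp
      (U.subtypeL.comp U.orthogonalProjectionOnto)‖

/-- The span of the first `k` columns of a matrix `U`, as a subspace of Euclidean space. -/
def spanCols {m N : ℕ} (U : Matrix (Fin m) (Fin N) ℝ) (k : ℕ) :
    Submodule ℝ (EuclideanSpace ℝ (Fin m)) :=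
  Submodule.span ℝ {x | ∃ j : Fin N, (j : ℕ) < k ∧ x = toE (fun i => U i j)}

/-!
The first `k + p'` columns of a Gaussian `n × (k + p)` matrix `Ω` form a Gaussian
`n × (k + p')` matrix `Ω'`, and `range (A Ω') ⊆ range (A Ω)`. Enlarging the target subspace `W`
can only decrease `sin θ₁(U, W) = ‖P_{W⊥} P_U‖`, since `P_{W'⊥} = P_{W'⊥} P_{W⊥}` for `W ≤ W'`
and `‖P_{W'⊥}‖ ≤ 1`. So under this coupling the event `sin θ₁ < t` for `Ω'` implies the one
for `Ω`.
-/

instance (n ℓ : ℕ) : IsProbabilityMeasure (stdGaussMat n ℓ) :=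
  inferInstanceAs (IsProbabilityMeasure
    (Measure.pi fun _ : Fin n => Measure.pi fun _ : Fin ℓ => gaussianReal 0 1))

section PrincipalAngle

variable {H : Type} [NormedAddCommGroup H] [InnerProductSpace ℝ H] [FiniteDimensional ℝ H]

theorem sinTheta_eq_norm_orthogonal_starProjection_comp (U W : Submodule ℝ H) :
    sinTheta U W = ‖Wᗮ.starProjection ∘L U.starProjection‖ := by
  rw [Submodule.starProjection_orthogonal]
  rfl

theorem sinTheta_antitone (U : Submodule ℝ H) : Antitone (sinTheta U) := by
  intro W W' h
  simp only [sinTheta_eq_norm_orthogonal_starProjection_comp]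
  calc ‖W'ᗮ.starProjection ∘L U.starProjection‖
      = ‖W'ᗮ.starProjection ∘L (Wᗮ.starProjection ∘L U.starProjection)‖ := by
        rw [← ContinuousLinearMap.comp_assoc,
          Submodule.starProjection_comp_starProjection_of_le (Submodule.orthogonal_le h)]
    _ ≤ ‖W'ᗮ.starProjection‖ * ‖Wᗮ.starProjection ∘L U.starProjection‖ :=
        ContinuousLinearMap.opNorm_comp_le _ _
    _ ≤ ‖Wᗮ.starProjection ∘L U.starProjection‖ :=
        mul_le_of_le_one_left (norm_nonneg _) (Submodule.starProjection_norm_le _)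

end PrincipalAngle

theorem colSpaceE_mul_le {m n ℓ : ℕ} (A : Matrix (Fin m) (Fin n) ℝ)
    (B : Matrix (Fin n) (Fin ℓ) ℝ) : colSpaceE (A * B) ≤ colSpaceE A :=
  Submodule.map_mono (by rw [Matrix.mulVecLin_mul]; exact LinearMap.range_comp_le_range _ _)

theorem colSpaceE_mul_submatrix_le {m n ℓ ℓ' : ℕ} (A : Matrix (Fin m) (Fin n) ℝ)
    (B : Matrix (Fin n) (Fin ℓ) ℝ) (f : Fin ℓ' → Fin ℓ) :
    colSpaceE (A * B.submatrix id f) ≤ colSpaceE (A * B) := by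
  have hsel : B.submatrix id f = B * (1 : Matrix (Fin ℓ) (Fin ℓ) ℝ).submatrix (Equiv.refl _) f := by
    rw [Matrix.mul_submatrix_one]
    rfl
  rw [hsel, ← Matrix.mul_assoc]
  exact colSpaceE_mul_le _ _

def MeasurableEquiv.piFinSplit (α : Type*) [MeasurableSpace α] {ℓ' ℓ : ℕ} (h : ℓ' ≤ ℓ) :
    (Fin ℓ → α) ≃ᵐ (Fin ℓ' → α) × (Fin (ℓ - ℓ') → α) :=
  (MeasurableEquiv.piCongrLeft (fun _ => α)
      (finSumFinEquiv.trans (finCongr (Nat.add_sub_of_le h)))).symm.trans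
    (MeasurableEquiv.sumPiEquivProdPi fun _ => α)

theorem measurePreserving_piFinSplit {α : Type*} [MeasurableSpace α] (μ : Measure α)
    [SigmaFinite μ] {ℓ' ℓ : ℕ} (h : ℓ' ≤ ℓ) :
    MeasurePreserving (MeasurableEquiv.piFinSplit α h) (Measure.pi fun _ => μ)
      ((Measure.pi fun _ => μ).prod (Measure.pi fun _ => μ)) :=
  (measurePreserving_sumPiEquivProdPi _).comp ((measurePreserving_piCongrLeft _ _).symm _)

theorem stdGaussMat_preimage_submatrix_castLE (n : ℕ) {ℓ' ℓ : ℕ} (h : ℓ' ≤ ℓ)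
    (S : Set (Matrix (Fin n) (Fin ℓ') ℝ)) :
    stdGaussMat n ℓ ((·.submatrix id (Fin.castLE h)) ⁻¹' S) = stdGaussMat n ℓ' S := by
  let E : Matrix (Fin n) (Fin ℓ) ℝ ≃ᵐ Matrix (Fin n) (Fin ℓ') ℝ × Matrix (Fin n) (Fin (ℓ - ℓ')) ℝ :=
    (MeasurableEquiv.piCongrRight fun _ => MeasurableEquiv.piFinSplit ℝ h).trans
      (MeasurableEquiv.arrowProdEquivProdArrow _ _ _)
  have hE : MeasurePreserving E (stdGaussMat n ℓ)
      ((stdGaussMat n ℓ').prod (stdGaussMat n (ℓ - ℓ'))) :=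
    (measurePreserving_arrowProdEquivProdArrow _ _ _ _ _).comp
      (measurePreserving_pi _ _ fun _ => measurePreserving_piFinSplit _ h)
  have hpre : (·.submatrix id (Fin.castLE h)) ⁻¹' S = E ⁻¹' (S ×ˢ Set.univ) := by
    ext Ω
    exact (and_iff_left (Set.mem_univ _)).symm
  -- `S` need not be measurable: `MeasurableEquiv` preimages and `Measure.prod_prod` allow that.
  rw [hpre, hE.measure_preimage_equiv, Measure.prod_prod, measure_univ, mul_one]

theorem cdf_monotone_oversampling_general (m n : ℕ) (A : Matrix (Fin m) (Fin n) ℝ)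
    (k p p' : ℕ) (hp : p' ≤ p)
    (U : Matrix (Fin m) (Fin (min m n)) ℝ) (t : ℝ) :
    stdGaussMat n (k + p') {Ω' | sinTheta (spanCols U k) (colSpaceE (A * Ω')) < t}
      ≤ stdGaussMat n (k + p) {Ω | sinTheta (spanCols U k) (colSpaceE (A * Ω)) < t} := by
  rw [← stdGaussMat_preimage_submatrix_castLE n (Nat.add_le_add_left hp k)]
  exact measure_mono fun Ω hΩ =>
    (sinTheta_antitone _ (colSpaceE_mul_submatrix_le A Ω _)).trans_lt hΩ

/-- The cumulative distribution function of the largest principal angle of the randomized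
range finder is pointwise increasing in the oversampling parameter: for `0 ≤ p′ ≤ p` and
every real `t`,
`ℙ(sin θ₁(U₁, range(AΩ)) < t) ≥ ℙ(sin θ₁(U₁, range(AΩ′)) < t)`,
where `Ω`, `Ω′` are standard Gaussian `n × (k+p)` and `n × (k+p′)` matrices. -/
theorem cdf_monotone_oversampling (m n : ℕ) (A : Matrix (Fin m) (Fin n) ℝ)
    (k p p' : ℕ) (hp : p' ≤ p) (hk : k ≤ min m n)
    (U : Matrix (Fin m) (Fin (min m n)) ℝ) (V : Matrix (Fin n) (Fin (min m n)) ℝ)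
    (σ : Fin (min m n) → ℝ)
    (hU : Uᵀ * U = 1) (hV : Vᵀ * V = 1)
    (hσ_mono : ∀ i j : Fin (min m n), i ≤ j → σ j ≤ σ i)
    (hσ_nonneg : ∀ j, 0 ≤ σ j)
    (hSVD : A = U * Matrix.diagonal σ * Vᵀ) (t : ℝ) :
    stdGaussMat n (k + p') {Ω' | sinTheta (spanCols U k) (colSpaceE (A * Ω')) < t}
      ≤ stdGaussMat n (k + p) {Ω | sinTheta (spanCols U k) (colSpaceE (A * Ω)) < t} :=
  cdf_monotone_oversampling_general m n A k p p' hp U t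
end
end

section
/- For every real number ν and all natural numbers μ and ℓ, the identity ∑_{j=0}^{ℓ} (−1)^j · binom(ν, j) · binom(ν+μ+ℓ−j, μ+ℓ+1−j) = (−1)^ℓ · binom(ν+μ, μ+ℓ+1) · binom(μ+ℓ, μ) holds, where binom denotes the generalized binomial coefficient. -/
noncomputable section

/-- The generalized binomial coefficient `binom(x, n) = x(x−1)⋯(x−n+1)/n!`. -/
def rchoose (x : ℝ) (n : ℕ) : ℝ := (∏ i ∈ Finset.range n, (x - i)) / (n.factorial : ℝ)

lemma rchoose_zero (x : ℝ) : rchoose x 0 = 1 := by simp [rchoose]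

lemma rchoose_succ_right (x : ℝ) (n : ℕ) :
    ((n : ℝ) + 1) * rchoose x (n + 1) = (x - n) * rchoose x n := by
  unfold rchoose
  rw [Finset.prod_range_succ, Nat.factorial_succ]
  have h : ((n.factorial : ℝ)) ≠ 0 := Nat.cast_ne_zero.mpr n.factorial_ne_zero
  push_cast
  field_simp

lemma rchoose_succ_left (x : ℝ) (n : ℕ) :
    ((n : ℝ) + 1) * rchoose (x + 1) (n + 1) = (x + 1) * rchoose x n := by
  unfold rchoose
  have hp : ∏ i ∈ Finset.range (n + 1), (x + 1 - (i : ℝ))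
      = (x + 1) * ∏ i ∈ Finset.range n, (x - (i : ℝ)) := by
    rw [Finset.prod_range_succ']
    rw [Finset.prod_congr rfl (fun i _ => by push_cast; ring :
      ∀ i ∈ Finset.range n, (x + 1 - ((i + 1 : ℕ) : ℝ)) = x - (i : ℝ))]
    push_cast
    ring
  rw [hp, Nat.factorial_succ]
  have h : ((n.factorial : ℝ)) ≠ 0 := Nat.cast_ne_zero.mpr n.factorial_ne_zero
  push_cast
  field_simp

lemma rchoose_shift (x : ℝ) (n : ℕ) :
    (x + 1 - n) * rchoose (x + 1) n = (x + 1) * rchoose x n := by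
  linear_combination rchoose_succ_left x n - rchoose_succ_right (x + 1) n

lemma rchoose_natCast_self (n : ℕ) : rchoose (n : ℝ) n = 1 := by
  induction n with
  | zero => simp [rchoose]
  | succ n ih =>
      have h := rchoose_succ_left (n : ℝ) n
      rw [ih, mul_one] at h
      have hne : ((n : ℝ) + 1) ≠ 0 := by positivity
      have h2 : rchoose ((n : ℝ) + 1) (n + 1) = 1 := mul_left_cancel₀ hne (by rw [h, mul_one])
      push_cast
      exact h2

/-- The WZ-certificate function for the telescoping step. -/
def gfun (ν : ℝ) (μ ℓ : ℕ) (j : ℕ) : ℝ :=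
  (-1 : ℝ) ^ (j + 1) * j * ((μ : ℝ) + 2 * ℓ + 3 - j) * rchoose ν j *
    rchoose (ν + μ + ℓ + 1 - j) (μ + ℓ + 2 - j)

lemma step_term (ν : ℝ) (μ ℓ j : ℕ) (hj : j ≤ ℓ + 1) :
    ((ℓ : ℝ) + 1) * ((μ : ℝ) + ℓ + 2) *
        ((-1 : ℝ) ^ j * rchoose ν j * rchoose (ν + μ + ℓ + 1 - j) (μ + ℓ + 2 - j))
      + (ν - ℓ - 1) * ((μ : ℝ) + ℓ + 1) *
        ((-1 : ℝ) ^ j * rchoose ν j * rchoose (ν + μ + ℓ - j) (μ + ℓ + 1 - j))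
    = gfun ν μ ℓ (j + 1) - gfun ν μ ℓ j := by
  unfold gfun
  have h1 : μ + ℓ + 2 - j = (μ + ℓ + 1 - j) + 1 := by omega
  have h2 : μ + ℓ + 2 - (j + 1) = μ + ℓ + 1 - j := by omega
  have h3 : ν + μ + ℓ + 1 - ((j + 1 : ℕ) : ℝ) = ν + μ + ℓ - j := by push_cast; ring
  have h4 : ν + (μ : ℝ) + ℓ + 1 - j = (ν + μ + ℓ - j) + 1 := by ring
  rw [h1, h2, h3, h4]
  have hkr : ((μ + ℓ + 1 - j : ℕ) : ℝ) = (μ : ℝ) + ℓ + 1 - j := by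
    rw [Nat.cast_sub (by omega : j ≤ μ + ℓ + 1)]; push_cast; ring
  have e1 := rchoose_succ_left (ν + μ + ℓ - j) (μ + ℓ + 1 - j)
  rw [hkr] at e1
  have e2 := rchoose_succ_right ν j
  push_cast
  linear_combination ((-1 : ℝ) ^ j * rchoose ν j * ((ℓ : ℝ) + 1 - j)) * e1
    - ((-1 : ℝ) ^ j * ((μ : ℝ) + 2 * ℓ + 2 - j) * rchoose (ν + μ + ℓ - j) (μ + ℓ + 1 - j)) * e2

lemma gfun_zero (ν : ℝ) (μ ℓ : ℕ) : gfun ν μ ℓ 0 = 0 := by simp [gfun]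

lemma gfun_end (ν : ℝ) (μ ℓ : ℕ) :
    gfun ν μ ℓ (ℓ + 2)
      = (ν - ℓ - 1) * ((μ : ℝ) + ℓ + 1) *
          ((-1 : ℝ) ^ (ℓ + 1) * rchoose ν (ℓ + 1) *
            rchoose (ν + μ + ℓ - (ℓ + 1 : ℕ)) (μ + ℓ + 1 - (ℓ + 1))) := by
  unfold gfun
  have h1 : μ + ℓ + 2 - (ℓ + 2) = μ := by omega
  have h2 : μ + ℓ + 1 - (ℓ + 1) = μ := by omega
  have h3 : ν + μ + ℓ + 1 - ((ℓ + 2 : ℕ) : ℝ) = ν + μ - 1 := by push_cast; ring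
  have h4 : ν + μ + ℓ - ((ℓ + 1 : ℕ) : ℝ) = ν + μ - 1 := by push_cast; ring
  rw [h1, h2, h3, h4]
  have e := rchoose_succ_right ν (ℓ + 1)
  push_cast at e ⊢
  linear_combination ((-1 : ℝ) ^ (ℓ + 1) * ((μ : ℝ) + ℓ + 1) * rchoose (ν + μ - 1) μ) * e

/-- For every real `ν` and naturals `μ`, `ℓ`:
`∑_{j=0}^{ℓ} (−1)^j binom(ν, j) binom(ν+μ+ℓ−j, μ+ℓ+1−j)
   = (−1)^ℓ binom(ν+μ, μ+ℓ+1) binom(μ+ℓ, μ)`. -/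
theorem binom_sum_identity (ν : ℝ) (μ ℓ : ℕ) :
    ∑ j ∈ Finset.range (ℓ + 1),
        (-1 : ℝ) ^ j * rchoose ν j * rchoose (ν + μ + ℓ - j) (μ + ℓ + 1 - j)
      = (-1 : ℝ) ^ ℓ * rchoose (ν + μ) (μ + ℓ + 1) * rchoose (↑μ + ↑ℓ) μ := by
  induction ℓ with
  | zero =>
      rw [Finset.sum_range_one]
      norm_num [rchoose_zero, rchoose_natCast_self]
  | succ ℓ ih =>
      have harg : ∀ j : ℕ, ν + (μ : ℝ) + ((ℓ + 1 : ℕ) : ℝ) - (j : ℝ) = ν + μ + ℓ + 1 - j := by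
        intro j; push_cast; ring
      have harg2 : ((μ : ℝ) + ((ℓ + 1 : ℕ) : ℝ)) = (μ : ℝ) + ℓ + 1 := by push_cast; ring
      simp only [harg, harg2]
      show ∑ j ∈ Finset.range (ℓ + 2),
          (-1 : ℝ) ^ j * rchoose ν j * rchoose (ν + μ + ℓ + 1 - j) (μ + ℓ + 2 - j)
        = (-1 : ℝ) ^ (ℓ + 1) * rchoose (ν + μ) (μ + ℓ + 2) * rchoose ((μ : ℝ) + ℓ + 1) μ
      have sumkey : ∑ j ∈ Finset.range (ℓ + 2),
          (((ℓ : ℝ) + 1) * ((μ : ℝ) + ℓ + 2) *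
              ((-1 : ℝ) ^ j * rchoose ν j * rchoose (ν + μ + ℓ + 1 - j) (μ + ℓ + 2 - j))
            + (ν - ℓ - 1) * ((μ : ℝ) + ℓ + 1) *
              ((-1 : ℝ) ^ j * rchoose ν j * rchoose (ν + μ + ℓ - j) (μ + ℓ + 1 - j)))
          = gfun ν μ ℓ (ℓ + 2) - gfun ν μ ℓ 0 := by
        rw [← Finset.sum_range_sub (gfun ν μ ℓ) (ℓ + 2)]
        exact Finset.sum_congr rfl fun j hj =>
          step_term ν μ ℓ j (Nat.lt_succ_iff.mp (Finset.mem_range.mp hj))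
      rw [Finset.sum_add_distrib, ← Finset.mul_sum, ← Finset.mul_sum, gfun_zero, sub_zero,
        gfun_end,
        Finset.sum_range_succ
          (fun j => (-1 : ℝ) ^ j * rchoose ν j * rchoose (ν + μ + ℓ - j) (μ + ℓ + 1 - j)) (ℓ + 1),
        ih] at sumkey
      have hC1 : ((ℓ : ℝ) + 1) * ((μ : ℝ) + ℓ + 2) ≠ 0 := by positivity
      refine mul_left_cancel₀ hC1 ?_
      have rrec : ((ℓ : ℝ) + 1) * ((μ : ℝ) + ℓ + 2) *
            ((-1 : ℝ) ^ (ℓ + 1) * rchoose (ν + μ) (μ + ℓ + 2) * rchoose ((μ : ℝ) + ℓ + 1) μ)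
          = -((ν - ℓ - 1) * ((μ : ℝ) + ℓ + 1) *
              ((-1 : ℝ) ^ ℓ * rchoose (ν + μ) (μ + ℓ + 1) * rchoose ((μ : ℝ) + ℓ) μ)) := by
        have a := rchoose_succ_right (ν + μ) (μ + ℓ + 1)
        have b := rchoose_shift ((μ : ℝ) + ℓ) μ
        push_cast at a
        have ha : ((μ : ℝ) + ℓ + 2) * rchoose (ν + μ) (μ + ℓ + 1 + 1) =
            (ν - ℓ - 1) * rchoose (ν + μ) (μ + ℓ + 1) := by linear_combination a
        have hidx : μ + ℓ + 1 + 1 = μ + ℓ + 2 := by omega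
        rw [hidx] at ha
        linear_combination ((-1 : ℝ) ^ (ℓ + 1) * ((ℓ : ℝ) + 1) * rchoose ((μ : ℝ) + ℓ + 1) μ) * ha
          + ((-1 : ℝ) ^ (ℓ + 1) * (ν - ℓ - 1) * rchoose (ν + μ) (μ + ℓ + 1)) * b
      rw [rrec]
      linarith [sumkey]
end
end

section
/- Let μ ∈ ℕ and let ν ≥ 1 be real, and let F(x) := ∑_{ℓ=0}^∞ (−1)^ℓ · binom(ν+μ, μ+ℓ+1) · binom(μ+ℓ, μ) · x^ℓ for |x| < 1. Then for every natural number r with r < ν, the r-th derivative of F satisfies lim_{x→1⁻} F^{(r)}(x) = (−1)^r · (μ+1)(μ+2)⋯(μ+r), where the empty product (r = 0) equals 1. -/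
open Filter

noncomputable section

/-- The coefficient `(−1)^ℓ · binom(ν+μ, μ+ℓ+1) · binom(μ+ℓ, μ)`. -/
def Fcoeff (μ : ℕ) (ν : ℝ) (ℓ : ℕ) : ℝ :=
  (-1 : ℝ) ^ ℓ * rchoose (ν + μ) (μ + ℓ + 1) * rchoose ((μ : ℝ) + ℓ) μ

/-- The power series `F(x) = ∑_{ℓ=0}^∞ (−1)^ℓ binom(ν+μ, μ+ℓ+1) binom(μ+ℓ, μ) x^ℓ`. -/
def Fseries (μ : ℕ) (ν : ℝ) (x : ℝ) : ℝ := ∑' ℓ : ℕ, Fcoeff μ ν ℓ * x ^ ℓ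

/-!
Differentiating termwise,
`(x ^ (μ + 1) * F x)' = (μ + 1) * binom(ν + μ, μ + 1) * x ^ μ * (1 - x) ^ (ν - 1)`:
`(μ + 1 + ℓ)` times the `ℓ`-th coefficient of `F` is, up to that constant, the `ℓ`-th
coefficient of the binomial series of `(1 - x) ^ (ν - 1)`. The same function is minus the
derivative of the truncated binomial sum `∑_{j ≤ μ} binom(ν + μ, j) x ^ j (1 - x) ^ (ν + μ - j)`,
which telescopes. Comparing values at `0` gives `F x = x ^ (-(μ + 1)) - (1 - x) ^ ν * S x` on
`(0, 1)`, with `S` smooth near `1`. Differentiating `(1 - x) ^ q * g` yields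
`(1 - x) ^ (q - 1) * g'` with `g'` smooth again, so for `r < ν` the second term contributes
nothing to the limit, and the first gives `(-1) ^ r (μ + 1) ⋯ (μ + r)`.
-/

open Topology Set
open scoped ContDiff

theorem rchoose_eq_ringChoose (x : ℝ) (n : ℕ) : rchoose x n = Ring.choose x n := by
  rw [Ring.choose_eq_smul, ← Polynomial.eval₂_smulOneHom_eq_smeval, Polynomial.eval₂_eq_eval_map,
    descPochhammer_map, descPochhammer_eval_eq_prod_range, rchoose, smul_eq_mul, div_eq_inv_mul]

theorem Ring.add_one_mul_choose_add_one {R : Type*} [CommRing R] [BinomialRing R] (r : R)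
    (j : ℕ) :
    ((j : R) + 1) * Ring.choose r (j + 1) = (r - j) * Ring.choose r j := by
  have h := Ring.choose_smul_choose r (n := j + 1) (Nat.le_succ j)
  rw [Nat.choose_succ_self_right, Nat.add_sub_cancel_left, Ring.choose_one_right,
    nsmul_eq_mul, mul_comm (Ring.choose r j)] at h
  exact_mod_cast h

theorem Fcoeff_eq_ringChoose (μ : ℕ) (ν : ℝ) (ℓ : ℕ) :
    Fcoeff μ ν ℓ = (-1) ^ ℓ * Ring.choose (ν + μ) (μ + ℓ + 1) * (μ + ℓ).choose μ := by
  rw [Fcoeff, rchoose_eq_ringChoose, rchoose_eq_ringChoose, ← Nat.cast_add, Ring.choose_natCast]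

theorem add_one_add_mul_Fcoeff (μ : ℕ) (ν : ℝ) (ℓ : ℕ) :
    ((μ : ℝ) + 1 + ℓ) * Fcoeff μ ν ℓ
      = (μ + 1) * Ring.choose (ν + μ) (μ + 1) * ((-1) ^ ℓ * Ring.choose (ν - 1) ℓ) := by
  have hsplit := Ring.choose_smul_choose (ν + μ) (Nat.le_add_right (μ + 1) ℓ)
  rw [Nat.add_sub_cancel_left, nsmul_eq_mul,
    show ν + μ - ((μ + 1 : ℕ) : ℝ) = ν - 1 by push_cast; ring] at hsplit
  have hnat : ((μ : ℝ) + 1 + ℓ) * (μ + ℓ).choose μ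
      = ((μ + 1 + ℓ).choose (μ + 1) : ℝ) * (μ + 1) := by
    exact_mod_cast add_right_comm μ ℓ 1 ▸ Nat.add_one_mul_choose_eq (μ + ℓ) μ
  rw [Fcoeff_eq_ringChoose, add_right_comm μ ℓ 1]
  linear_combination (-1) ^ ℓ * Ring.choose (ν + μ) (μ + 1 + ℓ) * hnat
    + (-1) ^ ℓ * (μ + 1) * hsplit

theorem Real.summable_abs_ringChoose_mul_pow (a : ℝ) {ρ : ℝ} (hρ₀ : 0 ≤ ρ) (hρ : ρ < 1) :
    Summable fun n => |Ring.choose a n| * ρ ^ n := by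
  lift ρ to NNReal using hρ₀
  have hlt : (ρ : ENNReal) < (binomialSeries ℝ a).radius :=
    lt_of_lt_of_le (by exact_mod_cast hρ) binomialSeries_radius_ge_one
  have h := (binomialSeries ℝ a).summable_norm_mul_pow hlt
  simpa only [binomialSeries, FormalMultilinearSeries.ofScalars_norm, Real.norm_eq_abs] using h

theorem Real.hasSum_ringChoose_mul_neg_pow (a : ℝ) {x : ℝ} (hx : |x| < 1) :
    HasSum (fun n => Ring.choose a n * (-x) ^ n) ((1 - x) ^ a) := by
  have h := Real.one_add_rpow_hasFPowerSeriesOnBall_zero (a := a) |>.hasSum (y := -x)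
    (by simpa [enorm_eq_nnnorm, ← NNReal.coe_lt_coe] using hx)
  simpa [sub_eq_add_neg, binomialSeries, mul_comm] using h

theorem hasDerivAt_pow_mul_Fseries (μ : ℕ) (ν : ℝ) {x : ℝ} (hx : |x| < 1) :
    HasDerivAt (fun y => y ^ (μ + 1) * Fseries μ ν y)
      ((μ + 1) * Ring.choose (ν + μ) (μ + 1) * (x ^ μ * (1 - x) ^ (ν - 1))) x := by
  set C : ℝ := (μ + 1) * Ring.choose (ν + μ) (μ + 1) with hC
  obtain ⟨ρ, hxρ, hρ⟩ := exists_between hx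
  have hρ₀ : 0 < ρ := (abs_nonneg x).trans_lt hxρ
  have hfun : (fun y => y ^ (μ + 1) * Fseries μ ν y)
      = fun y => ∑' ℓ, Fcoeff μ ν ℓ * y ^ (μ + 1 + ℓ) := by
    ext y
    rw [Fseries, ← tsum_mul_left]
    exact tsum_congr fun ℓ => by ring
  have hterm (ℓ : ℕ) (y : ℝ) : HasDerivAt (fun y => Fcoeff μ ν ℓ * y ^ (μ + 1 + ℓ))
      (C * (y ^ μ * (Ring.choose (ν - 1) ℓ * (-y) ^ ℓ))) y := by
    refine ((hasDerivAt_pow _ y).const_mul _).congr_deriv ?_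
    rw [show μ + 1 + ℓ - 1 = μ + ℓ by omega, mul_left_comm, ← mul_assoc]
    push_cast
    rw [add_one_add_mul_Fcoeff, ← hC, pow_add, neg_pow y]
    ring
  have hbound (ℓ : ℕ) (y : ℝ) (hy : y ∈ Metric.ball 0 ρ) :
      ‖C * (y ^ μ * (Ring.choose (ν - 1) ℓ * (-y) ^ ℓ))‖
        ≤ ‖C‖ * (|Ring.choose (ν - 1) ℓ| * ρ ^ ℓ) := by
    have hyρ : |y| < ρ := by simpa using hy
    have hy1 : |y| ^ μ ≤ 1 := pow_le_one₀ (abs_nonneg y) (hyρ.trans hρ).le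
    rw [norm_mul]
    gcongr
    simp only [norm_mul, norm_pow, norm_neg, Real.norm_eq_abs]
    calc |y| ^ μ * (|Ring.choose (ν - 1) ℓ| * |y| ^ ℓ)
        ≤ 1 * (|Ring.choose (ν - 1) ℓ| * ρ ^ ℓ) := by gcongr
      _ = _ := one_mul _
  have h := hasDerivAt_tsum_of_isPreconnected
    ((Real.summable_abs_ringChoose_mul_pow (ν - 1) hρ₀.le hρ).mul_left _) Metric.isOpen_ball
    (convex_ball 0 ρ).isPreconnected (fun ℓ y _ => hterm ℓ y) hbound (Metric.mem_ball_self hρ₀)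
    (by simp) (by simpa using hxρ)
  rw [hfun]
  refine h.congr_deriv ?_
  rw [tsum_mul_left, tsum_mul_left, (Real.hasSum_ringChoose_mul_neg_pow (ν - 1) hx).tsum_eq]

def partialBinomialSum (N : ℝ) (n : ℕ) (x : ℝ) : ℝ :=
  ∑ j ∈ Finset.range (n + 1), Ring.choose N j * x ^ j * (1 - x) ^ (N - j)

theorem hasDerivAt_partialBinomialSum (N : ℝ) (n : ℕ) {x : ℝ} (hx : x < 1) :
    HasDerivAt (partialBinomialSum N n)
      (-((n + 1) * Ring.choose N (n + 1) * (x ^ n * (1 - x) ^ (N - (n + 1))))) x := by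
  set v : ℕ → ℝ := fun j => j * Ring.choose N j * x ^ (j - 1) * (1 - x) ^ (N - j) with hv
  have hx' : 1 - x ≠ 0 := by linarith
  have hterm (j : ℕ) : HasDerivAt (fun y => Ring.choose N j * y ^ j * (1 - y) ^ (N - j))
      (v j - v (j + 1)) x := by
    have h := (((hasDerivAt_pow j x).const_mul (Ring.choose N j)).mul
      (((hasDerivAt_id x).const_sub 1).rpow_const (p := N - j) (Or.inl hx')))
    refine h.congr_deriv ?_
    simp only [hv, Nat.add_sub_cancel, id]
    push_cast
    rw [Ring.add_one_mul_choose_add_one, show N - j - 1 = N - (j + 1) by ring]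
    ring
  have h := HasDerivAt.fun_sum (u := Finset.range (n + 1)) fun j _ => hterm j
  rw [Finset.sum_range_sub'] at h
  unfold partialBinomialSum
  refine h.congr_deriv ?_
  simp only [hv, Nat.cast_zero, zero_mul, Nat.add_sub_cancel]
  push_cast
  ring

theorem pow_mul_Fseries_eq (μ : ℕ) (ν : ℝ) {x : ℝ} (hx : x ∈ Ioo (-1) 1) :
    x ^ (μ + 1) * Fseries μ ν x = 1 - partialBinomialSum (ν + μ) μ x := by
  have hP (y : ℝ) (hy : y ∈ Ioo (-1) 1) := hasDerivAt_pow_mul_Fseries μ ν (abs_lt.2 hy)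
  have hB (y : ℝ) (hy : y ∈ Ioo (-1) 1) :=
    (hasDerivAt_partialBinomialSum (ν + μ) μ hy.2).const_sub 1
  refine isOpen_Ioo.eqOn_of_deriv_eq isPreconnected_Ioo
    (fun y hy => (hP y hy).differentiableAt.differentiableWithinAt)
    (fun y hy => (hB y hy).differentiableAt.differentiableWithinAt)
    (fun y hy => ?_) (by norm_num : (0 : ℝ) ∈ Ioo (-1) 1) ?_ hx
  · rw [(hP y hy).deriv, (hB y hy).deriv, neg_neg, show ν + μ - (μ + 1) = ν - 1 by ring]
  · simp [partialBinomialSum, Finset.sum_range_succ']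

theorem partialBinomialSum_add_natCast (ν : ℝ) (μ : ℕ) {x : ℝ} (hx : x < 1) :
    partialBinomialSum (ν + μ) μ x
      = (1 - x) ^ ν
        * ∑ j ∈ Finset.range (μ + 1), Ring.choose (ν + μ) j * x ^ j * (1 - x) ^ (μ - j) := by
  rw [partialBinomialSum, Finset.mul_sum]
  refine Finset.sum_congr rfl fun j hj => ?_
  have hj : j ≤ μ := Nat.lt_succ_iff.1 (Finset.mem_range.1 hj)
  rw [show ν + μ - j = ν + ((μ - j : ℕ) : ℝ) by push_cast [hj]; ring,
    Real.rpow_add (by linarith), Real.rpow_natCast]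
  ring

theorem contDiffAt_zpow {𝕜 : Type*} [NontriviallyNormedField 𝕜] {n : WithTop ℕ∞} (m : ℤ)
    {x : 𝕜} (hx : x ≠ 0) : ContDiffAt 𝕜 n (fun y => y ^ m) x := by
  obtain ⟨k, rfl | rfl⟩ := m.eq_nat_or_neg
  · simp only [zpow_natCast]
    fun_prop
  · simp only [zpow_neg, zpow_natCast]
    exact (contDiffAt_id.pow k).inv (pow_ne_zero k hx)

theorem hasDerivAt_one_sub_rpow_mul {q : ℝ} {g : ℝ → ℝ} {x : ℝ} (hx : x ≠ 1)
    (hg : DifferentiableAt ℝ g x) :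
    HasDerivAt (fun y => (1 - y) ^ q * g y)
      ((1 - x) ^ (q - 1) * (-q * g x + (1 - x) * deriv g x)) x := by
  have hx' : 1 - x ≠ 0 := sub_ne_zero.2 hx.symm
  refine ((((hasDerivAt_id x).const_sub 1).rpow_const (p := q) (Or.inl hx')).mul
    hg.hasDerivAt).congr_deriv ?_
  simp only [id, Real.rpow_sub_one hx']
  field_simp

theorem tendsto_iteratedDeriv_one_sub_rpow_mul {U : Set ℝ} (hU : IsOpen U) (h1 : (1 : ℝ) ∈ U)
    {r : ℕ} {q : ℝ} (hr : (r : ℝ) < q) {g : ℝ → ℝ} (hg : ContDiffOn ℝ ∞ g U) :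
    Tendsto (iteratedDeriv r fun x => (1 - x) ^ q * g x) (𝓝[<] 1) (𝓝 0) := by
  induction r generalizing q g with
  | zero =>
    have hq : 0 < q := by simpa using hr
    have hcont : ContinuousAt (fun x => (1 - x) ^ q * g x) 1 :=
      ((continuous_const.sub continuous_id).continuousAt.rpow_const (Or.inr hq.le)).mul
        (hg.continuousOn.continuousAt (hU.mem_nhds h1))
    simpa [Real.zero_rpow hq.ne'] using hcont.tendsto.mono_left nhdsWithin_le_nhds
  | succ r ih =>
    set g' : ℝ → ℝ := fun x => -q * g x + (1 - x) * deriv g x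
    have hg' : ContDiffOn ℝ ∞ g' U :=
      (contDiffOn_const.mul hg).add
        ((contDiffOn_const.sub contDiffOn_id).mul (hg.deriv_of_isOpen hU (by simp)))
    have hderiv : EqOn (deriv fun x => (1 - x) ^ q * g x) (fun x => (1 - x) ^ (q - 1) * g' x)
        (Iio 1 ∩ U) := fun x hx =>
      (hasDerivAt_one_sub_rpow_mul hx.1.ne
        ((hg.differentiableOn (by simp)).differentiableAt (hU.mem_nhds hx.2))).deriv
    rw [iteratedDeriv_succ']
    refine (ih (q := q - 1) (by push_cast at hr; linarith) hg').congr' ?_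
    filter_upwards [inter_mem_nhdsWithin (Iio 1) (hU.mem_nhds h1)] with x hx
    exact (hderiv.iteratedDeriv_of_isOpen (isOpen_Iio.inter hU) r hx).symm

theorem tendsto_iteratedDeriv_zpow_neg (μ r : ℕ) :
    Tendsto (iteratedDeriv r fun x : ℝ => x ^ (-(μ + 1 : ℤ))) (𝓝 1)
      (𝓝 ((-1) ^ r * ∏ i ∈ Finset.range r, ((μ : ℝ) + 1 + i))) := by
  rw [iteratedDeriv_eq_iterate, iter_deriv_zpow']
  have hprod : ∏ i ∈ Finset.range r, (((-(μ + 1 : ℤ) : ℤ) : ℝ) - i)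
      = (-1) ^ r * ∏ i ∈ Finset.range r, ((μ : ℝ) + 1 + i) := by
    nth_rw 2 [← Finset.card_range r]
    rw [← Finset.prod_neg]
    refine Finset.prod_congr rfl fun i _ => ?_
    push_cast
    ring
  rw [hprod]
  have h := ((continuousAt_zpow₀ (1 : ℝ) (-(μ + 1 : ℤ) - r) (Or.inl one_ne_zero)).const_mul
    ((-1) ^ r * ∏ i ∈ Finset.range r, ((μ : ℝ) + 1 + i))).tendsto
  rwa [one_zpow, mul_one] at h

def Fcorrection (μ : ℕ) (ν x : ℝ) : ℝ :=
  x ^ (-(μ + 1 : ℤ))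
    * ∑ j ∈ Finset.range (μ + 1), Ring.choose (ν + μ) j * x ^ j * (1 - x) ^ (μ - j)

theorem contDiffOn_Fcorrection (μ : ℕ) (ν : ℝ) : ContDiffOn ℝ ∞ (Fcorrection μ ν) (Ioi 0) :=
  fun x hx => ((contDiffAt_zpow _ (ne_of_gt hx)).mul (by fun_prop)).contDiffWithinAt

theorem Fseries_eqOn (μ : ℕ) (ν : ℝ) :
    EqOn (Fseries μ ν) (fun x => x ^ (-(μ + 1 : ℤ)) - (1 - x) ^ ν * Fcorrection μ ν x)
      (Ioo 0 1) := by
  intro x hx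
  have h := pow_mul_Fseries_eq μ ν ⟨by linarith [hx.1], hx.2⟩
  rw [partialBinomialSum_add_natCast ν μ hx.2] at h
  have hx0 : x ^ (μ + 1) ≠ 0 := pow_ne_zero _ hx.1.ne'
  dsimp only
  rw [Fcorrection, show (-(μ + 1 : ℤ)) = -((μ + 1 : ℕ) : ℤ) by push_cast; rfl, zpow_neg,
    zpow_natCast]
  field_simp
  linear_combination h

theorem iteratedDeriv_Fseries (μ : ℕ) (ν : ℝ) (r : ℕ) {x : ℝ} (hx : x ∈ Ioo 0 1) :
    iteratedDeriv r (Fseries μ ν) x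
      = iteratedDeriv r (fun x : ℝ => x ^ (-(μ + 1 : ℤ))) x
        - iteratedDeriv r (fun x => (1 - x) ^ ν * Fcorrection μ ν x) x := by
  rw [(Fseries_eqOn μ ν).iteratedDeriv_of_isOpen isOpen_Ioo r hx]
  exact iteratedDeriv_sub (contDiffAt_zpow _ hx.1.ne')
    (((contDiffAt_const.sub contDiffAt_id).rpow_const_of_ne (sub_ne_zero.2 hx.2.ne')).mul
      (((contDiffOn_Fcorrection μ ν).contDiffAt (Ioi_mem_nhds hx.1)).of_le
        (by exact_mod_cast le_top)))

theorem Fseries_deriv_limit_at_one_general (μ : ℕ) (ν : ℝ) (r : ℕ) (hr : (r : ℝ) < ν) :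
    Tendsto (iteratedDeriv r (Fseries μ ν)) (nhdsWithin 1 (Set.Iio (1 : ℝ)))
      (nhds ((-1 : ℝ) ^ r * ∏ i ∈ Finset.range r, ((μ : ℝ) + 1 + i))) := by
  have h := ((tendsto_iteratedDeriv_zpow_neg μ r).mono_left nhdsWithin_le_nhds).sub
    (tendsto_iteratedDeriv_one_sub_rpow_mul isOpen_Ioi (mem_Ioi.2 one_pos) hr
      (contDiffOn_Fcorrection μ ν))
  rw [sub_zero] at h
  refine h.congr' ?_
  filter_upwards [Ioo_mem_nhdsLT zero_lt_one] with x hx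
  exact (iteratedDeriv_Fseries μ ν r hx).symm

/-- For `μ ∈ ℕ`, real `ν ≥ 1`, and every natural `r < ν`, the `r`-th derivative of `F`
satisfies `lim_{x→1⁻} F^{(r)}(x) = (−1)^r (μ+1)(μ+2)⋯(μ+r)` (empty product `= 1`). -/
theorem Fseries_deriv_limit_at_one (μ : ℕ) (ν : ℝ) (hν : 1 ≤ ν) (r : ℕ) (hr : (r : ℝ) < ν) :
    Tendsto (iteratedDeriv r (Fseries μ ν)) (nhdsWithin 1 (Set.Iio (1 : ℝ)))
      (nhds ((-1 : ℝ) ^ r * ∏ i ∈ Finset.range r, ((μ : ℝ) + 1 + i))) :=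
  Fseries_deriv_limit_at_one_general μ ν r hr
end
end

section
/- Let N ≥ 1, let 1 ≤ k ≤ N and p ≥ 0 be integers, and let σ̂₁ ≥ … ≥ σ̂_N ≥ 0 and σ₁ ≥ … ≥ σ_N ≥ 0 be nonincreasing sequences with σ̂_j ≥ σ_j for 1 ≤ j ≤ k and σ̂_j ≤ σ_j for k < j ≤ N. Let Σ = diag(σ₁,…,σ_N) and Σ̂ = diag(σ̂₁,…,σ̂_N), let E_k be the span of the first k standard basis vectors of ℝ^N, and let Ω be a standard Gaussian random N×(k+p) matrix. Then for every real t, ℙ( sinθ₁(E_k, range(ΣΩ)) < t ) ≤ ℙ( sinθ₁(E_k, range(Σ̂Ω)) < t ). That is, the largest principal angle of the randomized range finder is stochastically smaller for the matrix with larger leading singular values and smaller tail singular values. -/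
/-! The comparison holds for every `Ω`, so the measure inequality is monotonicity of measure.
`sin θ₁(U, W)` is the largest ratio `‖P_U r‖ / ‖r‖` over `r ⊥ W`. Unless some leading `σ j`
vanishes (then `sin θ₁ = 1` for `Σ` already), `Σ' = D Σ` with `D = diag (σ' / σ)` stretching the
coordinates in `E_k` and shrinking the others. Now `z ⊥ range (Σ' Ω)` iff `D z ⊥ range (Σ Ω)`, and
passing from `z` to `D z` enlarges the `E_k`-component and shrinks the `E_kᗮ`-component, so the
ratio for `z` is at most the ratio for `D z`, which is at most `sin θ₁(E_k, range (Σ Ω))`. -/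

open MeasureTheory ProbabilityTheory Matrix

noncomputable section

/-- The span of the first `k` standard basis vectors of `ℝ^N`. -/
def stdSubspace (N k : ℕ) : Submodule ℝ (EuclideanSpace ℝ (Fin N)) :=
  Submodule.span ℝ {x | ∃ j : Fin N, (j : ℕ) < k ∧ x = EuclideanSpace.single j 1}

section sinTheta

variable {H : Type} [NormedAddCommGroup H] [InnerProductSpace ℝ H] [FiniteDimensional ℝ H]

lemma sinTheta_nonneg (U W : Submodule ℝ H) : 0 ≤ sinTheta U W := norm_nonneg _

/-- Taking adjoints, `‖P_{W⊥} P_U‖ = ‖P_U P_{W⊥}‖`. -/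
lemma sinTheta_eq_norm_starProjection_comp (U W : Submodule ℝ H) :
    sinTheta U W = ‖U.starProjection ∘L Wᗮ.starProjection‖ := by
  have hself (K : Submodule ℝ H) :
      ContinuousLinearMap.adjoint K.starProjection = K.starProjection :=
    (isSelfAdjoint_starProjection K).adjoint_eq
  rw [← ContinuousLinearMap.adjoint.norm_map, ContinuousLinearMap.adjoint_comp, hself, hself,
    Submodule.starProjection_orthogonal]
  rfl

lemma norm_starProjection_le_sinTheta_mul {U W : Submodule ℝ H} {y : H} (hy : y ∈ Wᗮ) :
    ‖U.starProjection y‖ ≤ sinTheta U W * ‖y‖ := by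
  rw [sinTheta_eq_norm_starProjection_comp]
  simpa [Submodule.starProjection_eq_self_iff.2 hy] using
    (U.starProjection ∘L Wᗮ.starProjection).le_opNorm y

lemma sinTheta_le_of_forall_mem_orthogonal {U W : Submodule ℝ H} {c : ℝ} (hc : 0 ≤ c)
    (h : ∀ r ∈ Wᗮ, ‖U.starProjection r‖ ≤ c * ‖r‖) : sinTheta U W ≤ c := by
  rw [sinTheta_eq_norm_starProjection_comp]
  refine ContinuousLinearMap.opNorm_le_bound _ hc fun x => ?_
  calc ‖U.starProjection (Wᗮ.starProjection x)‖ ≤ c * ‖Wᗮ.starProjection x‖ :=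
        h _ (Wᗮ.starProjection_apply_mem x)
    _ ≤ c * ‖x‖ := mul_le_mul_of_nonneg_left (Wᗮ.norm_starProjection_apply_le x) hc

lemma sinTheta_le_one (U W : Submodule ℝ H) : sinTheta U W ≤ 1 :=
  sinTheta_le_of_forall_mem_orthogonal zero_le_one fun r _ => by
    simpa using U.norm_starProjection_apply_le r

lemma one_le_sinTheta_of_mem_of_mem_orthogonal {U W : Submodule ℝ H} {x : H} (hxU : x ∈ U)
    (hxW : x ∈ Wᗮ) (hx : x ≠ 0) : 1 ≤ sinTheta U W := by
  have h := norm_starProjection_le_sinTheta_mul (U := U) hxW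
  rw [Submodule.starProjection_eq_self_iff.2 hxU] at h
  exact (le_mul_iff_one_le_left (norm_pos_iff.2 hx)).1 h

end sinTheta

/-- The ratio `‖P_U z‖ / ‖z‖` can only grow when the `U`-component grows and the
`Uᗮ`-component shrinks. -/
lemma norm_starProjection_le_mul_norm_of_le_of_le {H : Type*} [NormedAddCommGroup H]
    [InnerProductSpace ℝ H] (U : Submodule ℝ H) [U.HasOrthogonalProjection] {s : ℝ} {y z : H}
    (hs : 0 ≤ s) (hy : ‖U.starProjection y‖ ≤ s * ‖y‖)
    (hU : ‖U.starProjection z‖ ≤ ‖U.starProjection y‖)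
    (hUperp : ‖Uᗮ.starProjection y‖ ≤ ‖Uᗮ.starProjection z‖) :
    ‖U.starProjection z‖ ≤ s * ‖z‖ := by
  have hy2 := pow_le_pow_left₀ (norm_nonneg _) hy 2
  have hU2 := pow_le_pow_left₀ (norm_nonneg _) hU 2
  have hUperp2 := pow_le_pow_left₀ (norm_nonneg _) hUperp 2
  rw [← pow_le_pow_iff_left₀ (norm_nonneg _) (by positivity) two_ne_zero]
  rw [mul_pow, U.norm_sq_eq_add_norm_sq_starProjection y] at hy2
  rw [mul_pow, U.norm_sq_eq_add_norm_sq_starProjection z]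
  rcases le_total (s ^ 2) 1 with hs1 | hs1
  · nlinarith [mul_le_mul_of_nonneg_left hU2 (sub_nonneg.2 hs1),
      mul_le_mul_of_nonneg_left hUperp2 (sq_nonneg s)]
  · nlinarith [sq_nonneg ‖Uᗮ.starProjection z‖, sq_nonneg ‖U.starProjection z‖]

lemma norm_le_norm_of_forall_abs_le {ι : Type*} [Fintype ι] {x y : EuclideanSpace ℝ ι}
    (h : ∀ j, |x j| ≤ |y j|) : ‖x‖ ≤ ‖y‖ := by
  rw [← pow_le_pow_iff_left₀ (norm_nonneg _) (norm_nonneg _) two_ne_zero,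
    EuclideanSpace.real_norm_sq_eq, EuclideanSpace.real_norm_sq_eq]
  exact Finset.sum_le_sum fun j _ => sq_le_sq.2 (h j)

section coordinates

variable {N : ℕ}

lemma mem_stdSubspace_of_forall {k : ℕ} {v : EuclideanSpace ℝ (Fin N)}
    (hv : ∀ j : Fin N, k ≤ (j : ℕ) → v j = 0) : v ∈ stdSubspace N k := by
  rw [← (EuclideanSpace.basisFun (Fin N) ℝ).sum_repr v]
  refine Submodule.sum_mem _ fun j _ => ?_
  by_cases hj : (j : ℕ) < k
  · exact Submodule.smul_mem _ _ (Submodule.subset_span ⟨j, hj, by simp⟩)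
  · simp [hv j (not_lt.1 hj)]

lemma mem_orthogonal_stdSubspace_of_forall {k : ℕ} {v : EuclideanSpace ℝ (Fin N)}
    (hv : ∀ j : Fin N, (j : ℕ) < k → v j = 0) : v ∈ (stdSubspace N k)ᗮ := by
  have hle : stdSubspace N k ≤ (ℝ ∙ v)ᗮ := Submodule.span_le.2 <| by
    rintro _ ⟨j, hj, rfl⟩
    simp [Submodule.mem_orthogonal_singleton_iff_inner_left, EuclideanSpace.inner_single_left,
      hv j hj]
  exact fun u hu => Submodule.mem_orthogonal_singleton_iff_inner_left.1 (hle hu)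

lemma starProjection_stdSubspace_apply (k : ℕ) (x : EuclideanSpace ℝ (Fin N)) (j : Fin N) :
    (stdSubspace N k).starProjection x j = if (j : ℕ) < k then x j else 0 := by
  set v : EuclideanSpace ℝ (Fin N) := toE fun j => if (j : ℕ) < k then x j else 0
  have hv : (stdSubspace N k).starProjection x = v := by
    refine Submodule.eq_starProjection_of_mem_orthogonal ?_ ?_
    · exact mem_stdSubspace_of_forall fun j hj => if_neg (not_lt.2 hj)
    · exact mem_orthogonal_stdSubspace_of_forall fun j hj => by simp [v, toE, hj]
  rw [hv]
  rfl

lemma starProjection_orthogonal_stdSubspace_apply (k : ℕ) (x : EuclideanSpace ℝ (Fin N))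
    (j : Fin N) :
    (stdSubspace N k)ᗮ.starProjection x j = if (j : ℕ) < k then 0 else x j := by
  rw [Submodule.starProjection_orthogonal_val, PiLp.sub_apply, starProjection_stdSubspace_apply]
  split_ifs <;> simp

lemma mem_orthogonal_colSpaceE_iff {m n : ℕ} (A : Matrix (Fin m) (Fin n) ℝ)
    (z : EuclideanSpace ℝ (Fin m)) : z ∈ (colSpaceE A)ᗮ ↔ ∀ c, z ⬝ᵥ (A *ᵥ c) = 0 := by
  simp only [Submodule.mem_orthogonal, colSpaceE, Submodule.mem_map, LinearMap.mem_range,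
    forall_exists_index, and_imp, forall_apply_eq_imp_iff]
  rfl

lemma mem_orthogonal_colSpaceE_diagonal_mul_iff {m n : ℕ} (d : Fin m → ℝ)
    (A : Matrix (Fin m) (Fin n) ℝ) (z : EuclideanSpace ℝ (Fin m)) :
    z ∈ (colSpaceE (diagonal d * A))ᗮ ↔ toE (fun j => d j * z j) ∈ (colSpaceE A)ᗮ := by
  have hz : z.ofLp ᵥ* diagonal d = (toE fun j => d j * z j).ofLp := by
    ext j
    simp [vecMul_diagonal, toE, mul_comm]
  simp only [mem_orthogonal_colSpaceE_iff, ← mulVec_mulVec, dotProduct_mulVec, hz]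

end coordinates

theorem sinTheta_stdSubspace_colSpaceE_diagonal_mul_le {N ℓ k : ℕ} (A : Matrix (Fin N) (Fin ℓ) ℝ)
    (d : Fin N → ℝ) (h_lead : ∀ j : Fin N, (j : ℕ) < k → 1 ≤ |d j|)
    (h_tail : ∀ j : Fin N, k ≤ (j : ℕ) → |d j| ≤ 1) :
    sinTheta (stdSubspace N k) (colSpaceE (diagonal d * A)) ≤
      sinTheta (stdSubspace N k) (colSpaceE A) := by
  refine sinTheta_le_of_forall_mem_orthogonal (sinTheta_nonneg _ _) fun z hz => ?_
  set y : EuclideanSpace ℝ (Fin N) := toE fun j => d j * z j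
  have hy : y ∈ (colSpaceE A)ᗮ := (mem_orthogonal_colSpaceE_diagonal_mul_iff d A z).1 hz
  have hyj : ∀ j, |y j| = |d j| * |z j| := fun j => abs_mul _ _
  refine norm_starProjection_le_mul_norm_of_le_of_le _ (sinTheta_nonneg _ _)
    (norm_starProjection_le_sinTheta_mul hy) ?_ ?_
  · refine norm_le_norm_of_forall_abs_le fun j => ?_
    simp only [starProjection_stdSubspace_apply]
    split_ifs with hj
    · rw [hyj]
      exact le_mul_of_one_le_left (abs_nonneg _) (h_lead j hj)
    · rfl
  · refine norm_le_norm_of_forall_abs_le fun j => ?_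
    simp only [starProjection_orthogonal_stdSubspace_apply]
    split_ifs with hj
    · rfl
    · rw [hyj]
      exact mul_le_of_le_one_left (abs_nonneg _) (h_tail j (not_lt.1 hj))

theorem sinTheta_stdSubspace_colSpaceE_diagonal_mul_le_diagonal_mul {N ℓ k : ℕ}
    (σ σ' : Fin N → ℝ)
    (hσ_nonneg : ∀ j, 0 ≤ σ j) (hσ'_nonneg : ∀ j, 0 ≤ σ' j)
    (h_lead : ∀ j : Fin N, (j : ℕ) < k → σ j ≤ σ' j)
    (h_tail : ∀ j : Fin N, k ≤ (j : ℕ) → σ' j ≤ σ j) (A : Matrix (Fin N) (Fin ℓ) ℝ) :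
    sinTheta (stdSubspace N k) (colSpaceE (diagonal σ' * A)) ≤
      sinTheta (stdSubspace N k) (colSpaceE (diagonal σ * A)) := by
  by_cases hdeg : ∃ j : Fin N, (j : ℕ) < k ∧ σ j = 0
  · obtain ⟨j, hjk, hj⟩ := hdeg
    have he : EuclideanSpace.single j (1 : ℝ) ∈ (colSpaceE (diagonal σ * A))ᗮ := by
      rw [mem_orthogonal_colSpaceE_diagonal_mul_iff]
      convert Submodule.zero_mem _
      ext i
      by_cases hij : i = j
      · simp [toE, hij, hj]
      · simp [toE, hij]
    exact (sinTheta_le_one _ _).trans <| one_le_sinTheta_of_mem_of_mem_orthogonal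
      (Submodule.subset_span ⟨j, hjk, rfl⟩) he (by simp)
  push Not at hdeg
  have hpos : ∀ j : Fin N, (j : ℕ) < k → 0 < σ j :=
    fun j hj => (hσ_nonneg j).lt_of_ne (hdeg j hj).symm
  have hfactor : diagonal σ' * A = diagonal (σ' / σ) * (diagonal σ * A) := by
    rw [← Matrix.mul_assoc, diagonal_mul_diagonal]
    congr
    ext j
    rcases lt_or_ge (j : ℕ) k with hj | hj
    · exact (div_mul_cancel₀ _ (hpos j hj).ne').symm
    · rcases (hσ_nonneg j).eq_or_lt with h0 | h0
      · have : σ' j = 0 := le_antisymm (h0 ▸ h_tail j hj) (hσ'_nonneg j)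
        simp [this]
      · exact (div_mul_cancel₀ _ h0.ne').symm
  rw [hfactor]
  refine sinTheta_stdSubspace_colSpaceE_diagonal_mul_le _ _ (fun j hj => ?_) (fun j hj => ?_)
  · rw [Pi.div_apply, abs_of_nonneg (div_nonneg (hσ'_nonneg j) (hσ_nonneg j))]
    exact (one_le_div (hpos j hj)).2 (h_lead j hj)
  · rw [Pi.div_apply, abs_of_nonneg (div_nonneg (hσ'_nonneg j) (hσ_nonneg j))]
    exact div_le_one_of_le₀ (h_tail j hj) (hσ_nonneg j)

theorem rrf_stochastic_monotonicity_general (N : ℕ) (k p : ℕ)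
    (σ σ' : Fin N → ℝ)
    (hσ_nonneg : ∀ j, 0 ≤ σ j) (hσ'_nonneg : ∀ j, 0 ≤ σ' j)
    (h_lead : ∀ j : Fin N, (j : ℕ) < k → σ j ≤ σ' j)
    (h_tail : ∀ j : Fin N, k ≤ (j : ℕ) → σ' j ≤ σ j)
    (t : ℝ) :
    stdGaussMat N (k + p)
        {Ω | sinTheta (stdSubspace N k) (colSpaceE (Matrix.diagonal σ * Ω)) < t}
      ≤ stdGaussMat N (k + p)
          {Ω | sinTheta (stdSubspace N k) (colSpaceE (Matrix.diagonal σ' * Ω)) < t} :=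
  measure_mono fun Ω hΩ =>
    (sinTheta_stdSubspace_colSpaceE_diagonal_mul_le_diagonal_mul σ σ' hσ_nonneg hσ'_nonneg
      h_lead h_tail Ω).trans_lt hΩ

/-- Worst-case monotonicity: the largest principal angle of the randomized range finder is
stochastically smaller for the matrix with larger leading singular values and smaller tail
singular values: for all `t`,
`ℙ(sin θ₁(E_k, range(ΣΩ)) < t) ≤ ℙ(sin θ₁(E_k, range(Σ̂Ω)) < t)`. -/
theorem rrf_stochastic_monotonicity (N : ℕ) (hN : 1 ≤ N) (k p : ℕ) (hk1 : 1 ≤ k) (hkN : k ≤ N)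
    (σ σ' : Fin N → ℝ)
    (hσ_mono : ∀ i j : Fin N, i ≤ j → σ j ≤ σ i)
    (hσ'_mono : ∀ i j : Fin N, i ≤ j → σ' j ≤ σ' i)
    (hσ_nonneg : ∀ j, 0 ≤ σ j) (hσ'_nonneg : ∀ j, 0 ≤ σ' j)
    (h_lead : ∀ j : Fin N, (j : ℕ) < k → σ j ≤ σ' j)
    (h_tail : ∀ j : Fin N, k ≤ (j : ℕ) → σ' j ≤ σ j)
    (t : ℝ) :
    stdGaussMat N (k + p)
        {Ω | sinTheta (stdSubspace N k) (colSpaceE (Matrix.diagonal σ * Ω)) < t}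
      ≤ stdGaussMat N (k + p)
          {Ω | sinTheta (stdSubspace N k) (colSpaceE (Matrix.diagonal σ' * Ω)) < t} :=
  rrf_stochastic_monotonicity_general N k p σ σ' hσ_nonneg hσ'_nonneg h_lead h_tail t
end
end
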